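/- Let d ≥ 1 be an integer, let H > 0, μ > 0, ν > 0, λ > 0, and let W ∈ ℝ^{d×d} be symmetric positive definite. Let N ≥ 1 and for each j ∈ {1,…,N} let φ_j ∈ ℝ^d with ‖φ_j‖ ≤ 1, let b_j ∈ [0, H], and let u_j ∈ ℝ^d with ‖u_j‖ ≤ 2; set v_j = W u_j and B_j = b_j · (v_j v_jᵀ)/‖v_j‖² if ‖v_j‖ ≥ μ and B_j = 0 otherwise. Let Σ = λ N I + Σ_{j=1}^N φ_j φ_jᵀ. Then for every z ∈ ℝ^d with ‖z‖ ≤ 1, writing z̃ = Proj_{S(W,ν)}(z): (i) |z̃ᵀ B_j z̃ − zᵀ B_j z| ≤ 4νH/μ for every j; and (ii) for every φ ∈ ℝ^d with ‖φ‖ ≤ 1, |Σ_{j=1}^N (φᵀ Σ^{-1} φ_j)(z̃ᵀ B_j z̃ − zᵀ B_j z)| ≤ 4νH/(μλ). -/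

import Mathlib

open Matrix

/-- `spectralSubspace A c` is the linear subspace of `ℝ^d` spanned by the eigenvectors of
`A` whose eigenvalues are at least `c`. -/
def spectralSubspace {d : ℕ} (A : Matrix (Fin d) (Fin d) ℝ) (c : ℝ) :
    Submodule ℝ (Fin d → ℝ) :=
  Submodule.span ℝ {v : Fin d → ℝ | ∃ μ : ℝ, c ≤ μ ∧ A *ᵥ v = μ • v}

/-- `IsOrthProjOnto P S` says that the matrix `P` is the orthogonal projection onto the
subspace `S`: every `P x` lies in `S` and `x - P x` is orthogonal to `S`. -/
def IsOrthProjOnto {d : ℕ} (P : Matrix (Fin d) (Fin d) ℝ)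
    (S : Submodule ℝ (Fin d → ℝ)) : Prop :=
  (∀ x, P *ᵥ x ∈ S) ∧ ∀ x, ∀ s ∈ S, (x - P *ᵥ x) ⬝ᵥ s = 0

/-! Write `z = z̃ + w`. As `w` is orthogonal to every eigenvector of `W` with eigenvalue `≥ ν`,
`‖W w‖ ≤ ν ‖w‖ ≤ ν`, hence `|v_j ⬝ w| = |u_j ⬝ W w| ≤ 2ν`. For the rank-one `B_j = c_j v_j v_jᵀ`
with `c_j = b_j / ‖v_j‖²` the quadratic forms differ by `c_j (v_j ⬝ (z + z̃)) (v_j ⬝ w)`, of size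
at most `c_j · 2‖v_j‖ · 2ν ≤ 4νH/μ` since `‖v_j‖ ≥ μ`. For (ii), `Σ ⪰ λN·I` gives
`‖Σ⁻¹ φ_j‖ ≤ 1/(λN)`, and the `N` terms sum to at most `4νH/(μλ)`. -/

section DotProduct

variable {n : Type*} [Fintype n]

lemma dotProduct_self_nonneg (x : n → ℝ) : 0 ≤ x ⬝ᵥ x := by
  simpa using dotProduct_star_self_nonneg x

lemma abs_dotProduct_le_sqrt_mul_sqrt (x y : n → ℝ) :
    |x ⬝ᵥ y| ≤ √(x ⬝ᵥ x) * √(y ⬝ᵥ y) := by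
  rw [← Real.sqrt_mul (dotProduct_self_nonneg x)]
  exact Real.abs_le_sqrt <| by
    simpa [dotProduct, sq] using Finset.sum_mul_sq_le_sq_mul_sq .univ x y

lemma abs_dotProduct_le_of_sqrt_le {x y : n → ℝ} {a b : ℝ} (hx : √(x ⬝ᵥ x) ≤ a)
    (hy : √(y ⬝ᵥ y) ≤ b) : |x ⬝ᵥ y| ≤ a * b :=
  (abs_dotProduct_le_sqrt_mul_sqrt x y).trans
    (mul_le_mul hx hy (Real.sqrt_nonneg _) ((Real.sqrt_nonneg _).trans hx))

lemma dotProduct_vecMulVec_self_mulVec (v x : n → ℝ) :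
    x ⬝ᵥ (vecMulVec v v *ᵥ x) = (v ⬝ᵥ x) ^ 2 := by
  rw [vecMulVec_mulVec, op_smul_eq_smul, dotProduct_smul, smul_eq_mul, dotProduct_comm, sq]

lemma Matrix.IsHermitian.dotProduct_mulVec_comm {A : Matrix n n ℝ} (hA : A.IsHermitian)
    (x y : n → ℝ) : x ⬝ᵥ (A *ᵥ y) = (A *ᵥ x) ⬝ᵥ y := by
  rw [dotProduct_mulVec, ← mulVec_transpose, ← conjTranspose_eq_transpose_of_trivial, hA]

lemma OrthonormalBasis.dotProduct_self_eq_sum_sq (e : OrthonormalBasis n ℝ (EuclideanSpace ℝ n))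
    (x : n → ℝ) : x ⬝ᵥ x = ∑ i, (⇑(e i) ⬝ᵥ x) ^ 2 := by
  have := e.sum_sq_inner_right (WithLp.toLp 2 x)
  simp only [EuclideanSpace.real_norm_sq_eq] at this
  simpa [EuclideanSpace.inner_eq_star_dotProduct, dotProduct, sq, mul_comm] using this.symm

end DotProduct

namespace IsOrthProjOnto

variable {d : ℕ} {P : Matrix (Fin d) (Fin d) ℝ} {S : Submodule ℝ (Fin d → ℝ)}

lemma dotProduct_self_eq_add (hP : IsOrthProjOnto P S) (z : Fin d → ℝ) :
    z ⬝ᵥ z = (P *ᵥ z) ⬝ᵥ (P *ᵥ z) + (z - P *ᵥ z) ⬝ᵥ (z - P *ᵥ z) := by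
  have h := hP.2 z _ (hP.1 z)
  rw [dotProduct_comm] at h
  conv_lhs => rw [← add_sub_cancel (P *ᵥ z) z]
  simp only [add_dotProduct, dotProduct_add, h, dotProduct_comm (z - P *ᵥ z) (P *ᵥ z)]
  ring

lemma sqrt_dotProduct_mulVec_le (hP : IsOrthProjOnto P S) (z : Fin d → ℝ) :
    √((P *ᵥ z) ⬝ᵥ (P *ᵥ z)) ≤ √(z ⬝ᵥ z) :=
  Real.sqrt_le_sqrt <| by
    linarith [hP.dotProduct_self_eq_add z, dotProduct_self_nonneg (z - P *ᵥ z)]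

lemma sqrt_dotProduct_sub_mulVec_le (hP : IsOrthProjOnto P S) (z : Fin d → ℝ) :
    √((z - P *ᵥ z) ⬝ᵥ (z - P *ᵥ z)) ≤ √(z ⬝ᵥ z) :=
  Real.sqrt_le_sqrt <| by
    linarith [hP.dotProduct_self_eq_add z, dotProduct_self_nonneg (P *ᵥ z)]

end IsOrthProjOnto

lemma Matrix.PosSemidef.sqrt_dotProduct_mulVec_le_of_orthogonal_spectralSubspace {d : ℕ}
    {W : Matrix (Fin d) (Fin d) ℝ} (hW : W.PosSemidef) {ν : ℝ} (hν : 0 ≤ ν) {w : Fin d → ℝ}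
    (hw : ∀ s ∈ spectralSubspace W ν, w ⬝ᵥ s = 0) :
    √((W *ᵥ w) ⬝ᵥ (W *ᵥ w)) ≤ ν * √(w ⬝ᵥ w) := by
  set e := hW.isHermitian.eigenvectorBasis
  set ev := hW.isHermitian.eigenvalues
  have coeff_mulVec (i : Fin d) : ⇑(e i) ⬝ᵥ (W *ᵥ w) = ev i * (⇑(e i) ⬝ᵥ w) := by
    rw [hW.isHermitian.dotProduct_mulVec_comm, hW.isHermitian.mulVec_eigenvectorBasis,
      smul_dotProduct, smul_eq_mul]
  have coeff_eq_zero {i : Fin d} (hi : ν ≤ ev i) : ⇑(e i) ⬝ᵥ w = 0 := by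
    rw [dotProduct_comm]
    exact hw _ (Submodule.subset_span ⟨ev i, hi, hW.isHermitian.mulVec_eigenvectorBasis i⟩)
  have hsq : (W *ᵥ w) ⬝ᵥ (W *ᵥ w) ≤ (ν * √(w ⬝ᵥ w)) ^ 2 := by
    rw [mul_pow, Real.sq_sqrt (dotProduct_self_nonneg w), e.dotProduct_self_eq_sum_sq,
      e.dotProduct_self_eq_sum_sq, Finset.mul_sum]
    refine Finset.sum_le_sum fun i _ => ?_
    rw [coeff_mulVec, mul_pow]
    rcases le_or_gt ν (ev i) with hi | hi
    · simp [coeff_eq_zero hi]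
    · have : ev i ^ 2 ≤ ν ^ 2 := pow_le_pow_left₀ (hW.eigenvalues_nonneg i) hi.le 2
      exact mul_le_mul_of_nonneg_right this (sq_nonneg _)
  exact Real.sqrt_le_left (by positivity) |>.mpr hsq

section Bonus

variable {n : Type*} [Fintype n]

noncomputable def bonusMatrix (μ b : ℝ) (v : n → ℝ) : Matrix n n ℝ :=
  if μ ≤ √(v ⬝ᵥ v) then (b * (v ⬝ᵥ v)⁻¹) • vecMulVec v v else 0

lemma abs_dotProduct_bonusMatrix_mulVec_sub_le {μ b H : ℝ} (hμ : 0 < μ) (hb : b ∈ Set.Icc 0 H)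
    (v : n → ℝ) {x y : n → ℝ} (hx : √(x ⬝ᵥ x) ≤ 1) (hy : √(y ⬝ᵥ y) ≤ 1) :
    |x ⬝ᵥ (bonusMatrix μ b v *ᵥ x) - y ⬝ᵥ (bonusMatrix μ b v *ᵥ y)| ≤
      2 * H / μ * |v ⬝ᵥ (x - y)| := by
  have hH : 0 ≤ H := hb.1.trans hb.2
  unfold bonusMatrix
  split_ifs with hv
  · set r := √(v ⬝ᵥ v)
    have hr : 0 < r := hμ.trans_le hv
    have hvv : v ⬝ᵥ v = r ^ 2 := (Real.sq_sqrt (dotProduct_self_nonneg v)).symm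
    have hsum : |v ⬝ᵥ x + v ⬝ᵥ y| ≤ 2 * r := by
      have := abs_add_le (v ⬝ᵥ x) (v ⬝ᵥ y)
      linarith [abs_dotProduct_le_of_sqrt_le (x := v) le_rfl hx,
        abs_dotProduct_le_of_sqrt_le (x := v) le_rfl hy]
    have hc : 0 ≤ b * (r ^ 2)⁻¹ := by have := hb.1; positivity
    simp only [smul_mulVec, dotProduct_smul, dotProduct_vecMulVec_self_mulVec, smul_eq_mul]
    rw [hvv, ← mul_sub, sq_sub_sq, ← dotProduct_sub, abs_mul, abs_of_nonneg hc, abs_mul,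
      ← mul_assoc]
    gcongr ?_ * _
    calc b * (r ^ 2)⁻¹ * |v ⬝ᵥ x + v ⬝ᵥ y| ≤ b * (r ^ 2)⁻¹ * (2 * r) := by gcongr
      _ = 2 * (b / r) := by field_simp
      _ ≤ 2 * (H / μ) := by gcongr; exact hb.2
      _ = 2 * H / μ := by ring
  · simp only [zero_mulVec, dotProduct_zero, sub_self, abs_zero]
    have := hb.1.trans hb.2
    positivity

end Bonus

section Covariance

variable {n : Type*} [Fintype n] [DecidableEq n]

lemma le_dotProduct_smul_one_add_sum_vecMulVec_mulVec {ι : Type*} (κ : ℝ) (s : Finset ι)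
    (φ : ι → n → ℝ) (x : n → ℝ) :
    κ * (x ⬝ᵥ x) ≤ x ⬝ᵥ ((κ • (1 : Matrix n n ℝ) + ∑ j ∈ s, vecMulVec (φ j) (φ j)) *ᵥ x) := by
  simp only [add_mulVec, sum_mulVec, smul_mulVec, one_mulVec, dotProduct_add, dotProduct_sum,
    dotProduct_smul, smul_eq_mul, dotProduct_vecMulVec_self_mulVec]
  exact le_add_of_nonneg_right (Finset.sum_nonneg fun j _ => sq_nonneg _)

lemma sqrt_dotProduct_inv_mulVec_le {A : Matrix n n ℝ} {κ : ℝ} (hκ : 0 < κ)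
    (hA : ∀ x, κ * (x ⬝ᵥ x) ≤ x ⬝ᵥ (A *ᵥ x)) (c : n → ℝ) :
    √((A⁻¹ *ᵥ c) ⬝ᵥ (A⁻¹ *ᵥ c)) ≤ √(c ⬝ᵥ c) / κ := by
  have hdet : IsUnit A.det := by
    refine isUnit_iff_ne_zero.mpr fun h => ?_
    obtain ⟨x, hx, hAx⟩ := exists_mulVec_eq_zero_iff.mpr h
    have := hA x
    rw [hAx, dotProduct_zero] at this
    exact hx (dotProduct_self_eq_zero.mp
      (le_antisymm (nonpos_of_mul_nonpos_right this hκ) (dotProduct_self_nonneg x)))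
  set y := A⁻¹ *ᵥ c
  have hAy : A *ᵥ y = c := by rw [mulVec_mulVec, mul_nonsing_inv _ hdet, one_mulVec]
  -- coercivity against Cauchy–Schwarz: `κ ‖y‖² ≤ y ⬝ A y = y ⬝ c ≤ ‖y‖ ‖c‖`
  have key : κ * √(y ⬝ᵥ y) * √(y ⬝ᵥ y) ≤ √(c ⬝ᵥ c) * √(y ⬝ᵥ y) := by
    rw [mul_assoc, Real.mul_self_sqrt (dotProduct_self_nonneg y), mul_comm √(c ⬝ᵥ c)]
    calc κ * (y ⬝ᵥ y) ≤ y ⬝ᵥ c := hAy ▸ hA y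
      _ ≤ |y ⬝ᵥ c| := le_abs_self _
      _ ≤ √(y ⬝ᵥ y) * √(c ⬝ᵥ c) := abs_dotProduct_le_sqrt_mul_sqrt y c
  rw [le_div_iff₀ hκ, mul_comm]
  rcases (Real.sqrt_nonneg (y ⬝ᵥ y)).eq_or_lt with h | h
  · rw [← h, mul_zero]; exact Real.sqrt_nonneg _
  · exact le_of_mul_le_mul_right key h

end Covariance

lemma abs_sum_mul_le {ι : Type*} (s : Finset ι) {a c : ι → ℝ} {α β : ℝ}
    (ha : ∀ j ∈ s, |a j| ≤ α) (hc : ∀ j ∈ s, |c j| ≤ β) :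
    |∑ j ∈ s, a j * c j| ≤ s.card * (α * β) := by
  calc |∑ j ∈ s, a j * c j| ≤ ∑ j ∈ s, |a j| * |c j| := by
        simpa only [abs_mul] using Finset.abs_sum_le_sum_abs (fun j => a j * c j) s
    _ ≤ ∑ _j ∈ s, α * β :=
        Finset.sum_le_sum fun j hj => mul_le_mul (ha j hj) (hc j hj) (abs_nonneg _)
          ((abs_nonneg _).trans (ha j hj))
    _ = s.card * (α * β) := by simp

theorem bonus_matrix_projection_stability_general {d N : ℕ} (hN : 1 ≤ N)
    (H μ ν lam : ℝ) (hμ : 0 < μ) (hν : 0 < ν) (hlam : 0 < lam)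
    (W : Matrix (Fin d) (Fin d) ℝ) (hW : W.PosDef)
    (φ : Fin N → Fin d → ℝ) (hφ : ∀ j, Real.sqrt (φ j ⬝ᵥ φ j) ≤ 1)
    (b : Fin N → ℝ) (hb : ∀ j, b j ∈ Set.Icc (0 : ℝ) H)
    (u : Fin N → Fin d → ℝ) (hu : ∀ j, Real.sqrt (u j ⬝ᵥ u j) ≤ 2)
    (v : Fin N → Fin d → ℝ) (hv : ∀ j, v j = W *ᵥ u j)
    (B : Fin N → Matrix (Fin d) (Fin d) ℝ)
    (hB : ∀ j, B j = if μ ≤ Real.sqrt (v j ⬝ᵥ v j)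
      then (b j * (v j ⬝ᵥ v j)⁻¹) • vecMulVec (v j) (v j) else 0)
    (Sig : Matrix (Fin d) (Fin d) ℝ)
    (hSig : Sig = (lam * (N : ℝ)) • (1 : Matrix (Fin d) (Fin d) ℝ) +
      ∑ j, vecMulVec (φ j) (φ j))
    (Pr : Matrix (Fin d) (Fin d) ℝ) (hPr : IsOrthProjOnto Pr (spectralSubspace W ν))
    (z : Fin d → ℝ) (hz : Real.sqrt (z ⬝ᵥ z) ≤ 1) :
    (∀ j, |(Pr *ᵥ z) ⬝ᵥ (B j *ᵥ (Pr *ᵥ z)) - z ⬝ᵥ (B j *ᵥ z)| ≤ 4 * ν * H / μ) ∧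
    (∀ φ₀ : Fin d → ℝ, Real.sqrt (φ₀ ⬝ᵥ φ₀) ≤ 1 →
      |∑ j, (φ₀ ⬝ᵥ (Sig⁻¹ *ᵥ φ j)) *
        ((Pr *ᵥ z) ⬝ᵥ (B j *ᵥ (Pr *ᵥ z)) - z ⬝ᵥ (B j *ᵥ z))| ≤ 4 * ν * H / (μ * lam)) := by
  set zt := Pr *ᵥ z
  have hzt : √(zt ⬝ᵥ zt) ≤ 1 := (hPr.sqrt_dotProduct_mulVec_le z).trans hz
  have hWw : √((W *ᵥ (z - zt)) ⬝ᵥ (W *ᵥ (z - zt))) ≤ ν * 1 :=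
    (hW.posSemidef.sqrt_dotProduct_mulVec_le_of_orthogonal_spectralSubspace hν.le
      (hPr.2 z)).trans <|
      mul_le_mul_of_nonneg_left ((hPr.sqrt_dotProduct_sub_mulVec_le z).trans hz) hν.le
  have hquad (j : Fin N) : |zt ⬝ᵥ (B j *ᵥ zt) - z ⬝ᵥ (B j *ᵥ z)| ≤ 4 * ν * H / μ := by
    have hBj : B j = bonusMatrix μ (b j) (v j) := hB j
    have hvw : |v j ⬝ᵥ (z - zt)| ≤ 2 * (ν * 1) := by
      rw [hv j, ← hW.isHermitian.dotProduct_mulVec_comm]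
      exact abs_dotProduct_le_of_sqrt_le (hu j) hWw
    have hH : 0 ≤ H := (hb j).1.trans (hb j).2
    calc |zt ⬝ᵥ (B j *ᵥ zt) - z ⬝ᵥ (B j *ᵥ z)|
        ≤ 2 * H / μ * |v j ⬝ᵥ (z - zt)| := by
          rw [abs_sub_comm, hBj]
          exact abs_dotProduct_bonusMatrix_mulVec_sub_le hμ (hb j) (v j) hz hzt
      _ ≤ 2 * H / μ * (2 * (ν * 1)) := by gcongr
      _ = 4 * ν * H / μ := by ring
  refine ⟨hquad, fun φ₀ hφ₀ => ?_⟩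
  have hκ : 0 < lam * N := by positivity
  have hSig_coercive (x : Fin d → ℝ) : lam * N * (x ⬝ᵥ x) ≤ x ⬝ᵥ (Sig *ᵥ x) :=
    hSig ▸ le_dotProduct_smul_one_add_sum_vecMulVec_mulVec _ _ φ x
  have hcoef (j : Fin N) : |φ₀ ⬝ᵥ (Sig⁻¹ *ᵥ φ j)| ≤ 1 * (1 / (lam * N)) :=
    abs_dotProduct_le_of_sqrt_le hφ₀ <|
      (sqrt_dotProduct_inv_mulVec_le hκ hSig_coercive (φ j)).trans
        (div_le_div_of_nonneg_right (hφ j) hκ.le)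
  calc _ ≤ (Finset.univ : Finset (Fin N)).card * (1 * (1 / (lam * N)) * (4 * ν * H / μ)) :=
        abs_sum_mul_le _ (fun j _ => hcoef j) (fun j _ => hquad j)
    _ = 4 * ν * H / (μ * lam) := by
        rw [Finset.card_univ, Fintype.card_fin]
        field_simp

/-- **Effect of the preconditioning-subspace projection on empirical bonus matrices
(Lemma `theta-precond-norm-bound`).**  With `v_j = W u_j`, bonus matrices
`B_j = 1{‖v_j‖ ≥ μ} · b_j · v_j v_jᵀ/‖v_j‖²` with `b_j ∈ [0, H]`, and regularized
covariance `Σ = λNI + ∑_j φ_j φ_jᵀ` of unit-ball feature vectors `φ_j`, for every unit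
vector `z` with projection `z̃` onto the span of eigenvectors of `W` with eigenvalue at
least `ν`: (i) each quadratic form changes by at most `4νH/μ`, and
(ii) `|∑_j (φᵀ Σ⁻¹ φ_j)(z̃ᵀ B_j z̃ − zᵀ B_j z)| ≤ 4νH/(μλ)` for any unit vector `φ`. -/
theorem bonus_matrix_projection_stability {d N : ℕ} (hd : 1 ≤ d) (hN : 1 ≤ N)
    (H μ ν lam : ℝ) (hH : 0 < H) (hμ : 0 < μ) (hν : 0 < ν) (hlam : 0 < lam)
    (W : Matrix (Fin d) (Fin d) ℝ) (hW : W.PosDef)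
    (φ : Fin N → Fin d → ℝ) (hφ : ∀ j, Real.sqrt (φ j ⬝ᵥ φ j) ≤ 1)
    (b : Fin N → ℝ) (hb : ∀ j, b j ∈ Set.Icc (0 : ℝ) H)
    (u : Fin N → Fin d → ℝ) (hu : ∀ j, Real.sqrt (u j ⬝ᵥ u j) ≤ 2)
    (v : Fin N → Fin d → ℝ) (hv : ∀ j, v j = W *ᵥ u j)
    (B : Fin N → Matrix (Fin d) (Fin d) ℝ)
    (hB : ∀ j, B j = if μ ≤ Real.sqrt (v j ⬝ᵥ v j)
      then (b j * (v j ⬝ᵥ v j)⁻¹) • vecMulVec (v j) (v j) else 0)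
    (Sig : Matrix (Fin d) (Fin d) ℝ)
    (hSig : Sig = (lam * (N : ℝ)) • (1 : Matrix (Fin d) (Fin d) ℝ) +
      ∑ j, vecMulVec (φ j) (φ j))
    (Pr : Matrix (Fin d) (Fin d) ℝ) (hPr : IsOrthProjOnto Pr (spectralSubspace W ν))
    (z : Fin d → ℝ) (hz : Real.sqrt (z ⬝ᵥ z) ≤ 1) :
    (∀ j, |(Pr *ᵥ z) ⬝ᵥ (B j *ᵥ (Pr *ᵥ z)) - z ⬝ᵥ (B j *ᵥ z)| ≤ 4 * ν * H / μ) ∧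
    (∀ φ₀ : Fin d → ℝ, Real.sqrt (φ₀ ⬝ᵥ φ₀) ≤ 1 →
      |∑ j, (φ₀ ⬝ᵥ (Sig⁻¹ *ᵥ φ j)) *
        ((Pr *ᵥ z) ⬝ᵥ (B j *ᵥ (Pr *ᵥ z)) - z ⬝ᵥ (B j *ᵥ z))| ≤ 4 * ν * H / (μ * lam)) :=
  bonus_matrix_projection_stability_general hN H μ ν lam hμ hν hlam W hW φ hφ b hb u hu v hv B hB
    Sig hSig Pr hPr z hz
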